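/- arXiv:2605.22713 — 3 statements merged into one kernel-verified Lean document; each statement's English description precedes it below -/
import Mathlib

section
/- Let M ⊆ B(H) be a von Neumann algebra, let R be a contraction in M_d ⊗ M, let T be a contraction whose blocks T i j lie in the commutant M', and let ψ ∈ H be a unit vector. Then the following are equivalent: (i) ⟨(R i 0)(T j 0) ψ, ψ⟩ = (if i = j then α i else 0) for all i, j ∈ Fin d; (ii) (R i 0)(T j 0) ψ = (if i = j then α i else 0) • ψ for all i, j ∈ Fin d. (Condition (ii) is the componentwise form of the defining embezzlement equation (R ⊗ I_d)(I_d ⊗ T)(e₀ ⊗ ψ ⊗ e₀) = f(φ ⊗ ψ).) -/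
open scoped InnerProductSpace
open ContinuousLinearMap

/-- The block operator on `ℓ²(Fin d; H)` associated with a `d × d` matrix of operators on `H`,
acting by `(R x) i = ∑ j, (R i j) (x j)`. -/
noncomputable def blockOp {H : Type*} [NormedAddCommGroup H] [InnerProductSpace ℂ H] {d : ℕ}
    (R : Fin d → Fin d → H →L[ℂ] H) :
    (PiLp 2 fun _ : Fin d => H) →L[ℂ] (PiLp 2 fun _ : Fin d => H) :=
  (((PiLp.continuousLinearEquiv 2 ℂ (fun _ : Fin d => H)).symm :
      (∀ _ : Fin d, H) →L[ℂ] (PiLp 2 fun _ : Fin d => H))) ∘L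
    (ContinuousLinearMap.pi fun i => ∑ j, (R i j) ∘L (ContinuousLinearMap.proj j)) ∘L
    (((PiLp.continuousLinearEquiv 2 ℂ (fun _ : Fin d => H)) :
      (PiLp 2 fun _ : Fin d => H) →L[ℂ] (∀ _ : Fin d, H)))

variable {H : Type*} [NormedAddCommGroup H] [InnerProductSpace ℂ H] [CompleteSpace H]

/-- `R` is a contraction in `M_d ⊗ M`: all blocks lie in `M` and the block operator on
`ℓ²(Fin d; H)` has operator norm at most `1`. -/
def IsContractionIn (M : VonNeumannAlgebra H) {d : ℕ}
    (R : Fin d → Fin d → H →L[ℂ] H) : Prop :=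
  (∀ i j, R i j ∈ M) ∧ ‖blockOp R‖ ≤ 1

/-- A bipartite exact embezzlement protocol for `α` in `(M, M', H)`: `R` is a contraction in
`M_d ⊗ M`, `T` is a contraction with blocks in the commutant `M'`, `ψ` is a unit vector, and
`(R i 0)(T j 0) ψ = δ_{ij} α i • ψ` for all `i, j`. -/
def BipartiteProtocol (M : VonNeumannAlgebra H) {d : ℕ} [NeZero d] (α : Fin d → ℝ)
    (R T : Fin d → Fin d → H →L[ℂ] H) (ψ : H) : Prop :=
  IsContractionIn M R ∧ IsContractionIn M.commutant T ∧ ‖ψ‖ = 1 ∧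
    ∀ i j, (R i 0) ((T j 0) ψ) = (if i = j then (α i : ℂ) else 0) • ψ

/-- A monopartite exact embezzlement protocol for `α` in `(M, H)`: `R` is a contraction in
`M_d ⊗ M`, `ψ` is a unit vector, and `⟨(R i 0)* X (R j 0) ψ, ψ⟩ = δ_{ij} (α i)² ⟨X ψ, ψ⟩`
for all `X ∈ M` and all `i, j`. -/
def MonopartiteProtocol (M : VonNeumannAlgebra H) {d : ℕ} [NeZero d] (α : Fin d → ℝ)
    (R : Fin d → Fin d → H →L[ℂ] H) (ψ : H) : Prop :=
  IsContractionIn M R ∧ ‖ψ‖ = 1 ∧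
    ∀ X ∈ M, ∀ i j : Fin d,
      ⟪(adjoint (R i 0)) (X ((R j 0) ψ)), ψ⟫_ℂ
        = (if i = j then ((α i : ℂ)) ^ 2 else 0) * ⟪X ψ, ψ⟫_ℂ

/-- The orthogonal projection of `H` onto the closure of `{Y ψ : Y ∈ S}`, as an operator
on `H`. -/
noncomputable def suppProjOn (S : Set (H →L[ℂ] H)) (ψ : H) : H →L[ℂ] H :=
  letI K := (Submodule.span ℂ ((fun Y : H →L[ℂ] H => Y ψ) '' S)).topologicalClosure
  K.subtypeL ∘L (Submodule.orthogonalProjectionOnto K : H →L[ℂ] K)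

/-- The support projection of the state `⟨· ψ, ψ⟩` on `M`: the orthogonal projection onto
the closure of `M' ψ`. -/
noncomputable def suppP (M : VonNeumannAlgebra H) (ψ : H) : H →L[ℂ] H :=
  suppProjOn (M.commutant : Set (H →L[ℂ] H)) ψ

/-- The support projection of the state `⟨· ψ, ψ⟩` on `M'`: the orthogonal projection onto
the closure of `M ψ`. -/
noncomputable def suppP' (M : VonNeumannAlgebra H) (ψ : H) : H →L[ℂ] H :=
  suppProjOn (M : Set (H →L[ℂ] H)) ψ

/-!
Each column of a contraction on `ℓ²(Fin d; H)` maps `η` to vectors whose squared norms sum to at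
most `‖η‖²`. Applied to `T` and then to `R`, this gives `∑ i j, ‖R i 0 (T j 0 ψ)‖² ≤ 1`. The
inner-product condition says that the components of these vectors along `ψ` already have squared
moduli summing to `∑ i, α i² = 1`, so by Cauchy–Schwarz none of them has a component orthogonal
to `ψ`.
-/

section

variable {E : Type*} [NormedAddCommGroup E] [InnerProductSpace ℂ E]

lemma blockOp_apply {d : ℕ} (R : Fin d → Fin d → E →L[ℂ] E) (x : PiLp 2 fun _ : Fin d => E)
    (i : Fin d) : blockOp R x i = ∑ j, R i j (x j) := by
  change (∑ j, (R i j) ∘L ContinuousLinearMap.proj j) x.ofLp = _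
  rw [sum_apply]
  rfl

lemma sum_norm_sq_apply_le_of_norm_blockOp_le_one {d : ℕ} {R : Fin d → Fin d → E →L[ℂ] E}
    (hR : ‖blockOp R‖ ≤ 1) (k : Fin d) (η : E) : ∑ i, ‖R i k η‖ ^ 2 ≤ ‖η‖ ^ 2 := by
  have hcol : ∀ i, blockOp R (PiLp.single 2 k η) i = R i k η := by
    intro i
    simp [blockOp_apply, PiLp.single_apply, apply_ite]
  calc ∑ i, ‖R i k η‖ ^ 2 = ‖blockOp R (PiLp.single 2 k η)‖ ^ 2 := by
        simp [PiLp.norm_sq_eq_of_L2, hcol]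
    _ ≤ ‖η‖ ^ 2 := by
        gcongr
        simpa using le_of_opNorm_le _ hR (PiLp.single 2 k η)

lemma norm_sub_inner_smul_sq {ψ : E} (hψ : ‖ψ‖ = 1) (v : E) :
    ‖v - ⟪ψ, v⟫_ℂ • ψ‖ ^ 2 = ‖v‖ ^ 2 - ‖⟪ψ, v⟫_ℂ‖ ^ 2 := by
  rw [norm_sub_sq (𝕜 := ℂ), inner_smul_right, ← inner_conj_symm ψ v, RCLike.conj_mul, norm_smul,
    hψ]
  simp only [mul_one, RCLike.norm_conj]
  norm_cast
  ring

lemma eq_inner_smul_of_norm_sq_le {ψ : E} (hψ : ‖ψ‖ = 1) {v : E}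
    (h : ‖v‖ ^ 2 ≤ ‖⟪ψ, v⟫_ℂ‖ ^ 2) : v = ⟪ψ, v⟫_ℂ • ψ := by
  have hsq : ‖v - ⟪ψ, v⟫_ℂ • ψ‖ ^ 2 ≤ 0 := by
    rw [norm_sub_inner_smul_sq hψ]
    linarith
  rw [← sub_eq_zero, ← norm_eq_zero]
  exact pow_eq_zero_iff two_ne_zero |>.mp (le_antisymm hsq (sq_nonneg _))

lemma eq_inner_smul_of_sum_norm_sq_le {ι : Type*} [Fintype ι] {ψ : E} (hψ : ‖ψ‖ = 1)
    {v : ι → E} (h : ∑ i, ‖v i‖ ^ 2 ≤ ∑ i, ‖⟪ψ, v i⟫_ℂ‖ ^ 2) (i : ι) : v i = ⟪ψ, v i⟫_ℂ • ψ := by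
  have hcs : ∀ i ∈ Finset.univ, ‖⟪ψ, v i⟫_ℂ‖ ^ 2 ≤ ‖v i‖ ^ 2 := fun i _ => by
    gcongr
    simpa [hψ] using norm_inner_le_norm (𝕜 := ℂ) ψ (v i)
  have hsum := (Finset.sum_eq_sum_iff_of_le hcs).mp (le_antisymm (Finset.sum_le_sum hcs) h)
  exact eq_inner_smul_of_norm_sq_le hψ (hsum i (Finset.mem_univ i)).ge

end

theorem bipartite_inner_iff_vector_general
    {H : Type*} [NormedAddCommGroup H] [InnerProductSpace ℂ H] [CompleteSpace H]
    (M : VonNeumannAlgebra H) {d : ℕ} [NeZero d]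
    (α : Fin d → ℝ) (hsum : ∑ i, (α i) ^ 2 = 1)
    (R T : Fin d → Fin d → H →L[ℂ] H)
    (hR : IsContractionIn M R) (hT : IsContractionIn M.commutant T)
    (ψ : H) (hψ : ‖ψ‖ = 1) :
    (∀ i j, ⟪(R i 0) ((T j 0) ψ), ψ⟫_ℂ = if i = j then (α i : ℂ) else 0) ↔
      (∀ i j, (R i 0) ((T j 0) ψ) = (if i = j then (α i : ℂ) else 0) • ψ) := by
  constructor
  · intro hinner
    set v : Fin d × Fin d → H := fun p => R p.2 0 (T p.1 0 ψ)
    have hcoef : ∀ i j, ⟪ψ, R i 0 (T j 0 ψ)⟫_ℂ = if i = j then (α i : ℂ) else 0 := by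
      intro i j
      rw [← inner_conj_symm, hinner]
      split_ifs <;> simp
    have hnorm : ∑ p, ‖v p‖ ^ 2 ≤ ∑ p, ‖⟪ψ, v p⟫_ℂ‖ ^ 2 :=
      calc ∑ p, ‖v p‖ ^ 2 = ∑ j, ∑ i, ‖R i 0 (T j 0 ψ)‖ ^ 2 :=
          Fintype.sum_prod_type' fun j i => ‖R i 0 (T j 0 ψ)‖ ^ 2
        _ ≤ ∑ j, ‖T j 0 ψ‖ ^ 2 := Finset.sum_le_sum fun j _ =>
          sum_norm_sq_apply_le_of_norm_blockOp_le_one hR.2 0 _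
        _ ≤ ‖ψ‖ ^ 2 := sum_norm_sq_apply_le_of_norm_blockOp_le_one hT.2 0 ψ
        _ = ∑ i, α i ^ 2 := by rw [hψ, one_pow, hsum]
        _ = ∑ p, ‖⟪ψ, v p⟫_ℂ‖ ^ 2 := by
          rw [Fintype.sum_prod_type]
          simp [v, hcoef, apply_ite]
    intro i j
    rw [← hcoef]
    exact eq_inner_smul_of_sum_norm_sq_le hψ hnorm (j, i)
  · intro hvec i j
    rw [hvec, inner_smul_left, inner_self_eq_norm_sq_to_K, hψ]
    split_ifs <;> simp

/-- For contractions `R` in `M_d ⊗ M` and `T` with blocks in `M'`, and a unit vector `ψ`,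
the inner-product condition `⟨(R i 0)(T j 0) ψ, ψ⟩ = δ_{ij} α i` is equivalent to the
vector condition `(R i 0)(T j 0) ψ = δ_{ij} α i • ψ`. -/
theorem bipartite_inner_iff_vector
    {H : Type*} [NormedAddCommGroup H] [InnerProductSpace ℂ H] [CompleteSpace H]
    (M : VonNeumannAlgebra H) {d : ℕ} [NeZero d] (hd : 2 ≤ d)
    (α : Fin d → ℝ) (hα : ∀ i, 0 < α i) (hsum : ∑ i, (α i) ^ 2 = 1)
    (R T : Fin d → Fin d → H →L[ℂ] H)
    (hR : IsContractionIn M R) (hT : IsContractionIn M.commutant T)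
    (ψ : H) (hψ : ‖ψ‖ = 1) :
    (∀ i j, ⟪(R i 0) ((T j 0) ψ), ψ⟫_ℂ = if i = j then (α i : ℂ) else 0) ↔
      (∀ i j, (R i 0) ((T j 0) ψ) = (if i = j then (α i : ℂ) else 0) • ψ) :=
  bipartite_inner_iff_vector_general M α hsum R T hR hT ψ hψ
end

section
/- Let H be a complex Hilbert space and let V₀, …, V_{d-1} : H →L[ℂ] H satisfy (V i)* (V i) = 1 for every i and ∑_{i ∈ Fin d} (V i)(V i)* = 1 (a collection of d Cuntz isometries). Let ψ ∈ H be a unit vector such that ⟨(V i) X (V j)* ψ, ψ⟩ = (if i = j then (α i)^2 else 0) · ⟨X ψ, ψ⟩ for all i, j ∈ Fin d and all X in the unital *-subalgebra of B(H) generated by {V₀, …, V_{d-1}}. Then for all lists μ, ν over Fin d, ⟨V_μ (V_ν)* ψ, ψ⟩ = (if μ = ν then (α_μ)^2 else 0), where V_μ = V_{μ₁} ∘ ⋯ ∘ V_{μ_m} (with V_[] = 1) and α_μ = ∏ₖ α_{μₖ} (with α_[] = 1). In particular, the state x ↦ ⟨x ψ, ψ⟩ on the Cuntz algebra O_d generated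 by V₀, …, V_{d-1} is uniquely determined by α: it is the unique state s on O_d satisfying s(v_i x v_j*) = δ_{ij} (α i)^2 s(x). -/
/-!
Write `φ X = ⟪X ψ, ψ⟫`. Inserting `∑ j, V j (V j)* = 1` after `V i X` and applying the
quasi-free condition moves a leading `V i` to the end of a word at the cost of a factor
`(α i)²`. Cycling a whole word `V_ρ` once around gives `φ V_ρ = (α_ρ)² φ V_ρ`, and
`(α_ρ)² < 1` for `ρ ≠ []` because `d ≥ 2` and all `α i > 0`; so `φ` vanishes on nonempty words
and on their adjoints. Peeling off the outer letters of `V_μ (V_ν)*` with the quasi-free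
condition then yields the formula.
-/

open scoped InnerProductSpace
open ContinuousLinearMap

theorem list_prod_map_mem {ι M S : Type*} [Monoid M] [SetLike S M] [SubmonoidClass S M] {s : S}
    {v : ι → M} (hv : ∀ i, v i ∈ s) (l : List ι) : (l.map v).prod ∈ s :=
  list_prod_mem fun _ hx => by
    obtain ⟨i, -, rfl⟩ := List.mem_map.mp hx
    exact hv i

theorem List.prod_map_lt_one {ι R : Type*} [CommMonoidWithZero R] [PartialOrder R]
    [ZeroLEOneClass R] [PosMulMono R] {f : ι → R} (h0 : ∀ i, 0 ≤ f i) (h1 : ∀ i, f i < 1) :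
    ∀ {l : List ι}, l ≠ [] → (l.map f).prod < 1
  | [], hl => (hl rfl).elim
  | i :: l, _ => by
    have hle : (l.map f).prod ≤ 1 := by
      simpa using List.prod_map_le_prod_map₀ (s := l) f (fun _ => 1) (fun i _ => h0 i)
        (fun i _ => (h1 i).le)
    simpa using mul_lt_one_of_nonneg_of_lt_one_left (h0 i) (h1 i) hle

section QuasiFree

variable {ι E R S : Type*} [Fintype ι] [DecidableEq ι] [Semiring E] [StarRing E]
  [CommSemiring R] [SetLike S E] [SubmonoidClass S E]

def IsQuasiFree (s : S) (v : ι → E) (c : ι → R) (φ : E →+ R) : Prop :=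
  ∀ X ∈ s, ∀ i j, φ (v i * X * star (v j)) = (if i = j then c i else 0) * φ X

variable {s : S} {v : ι → E} {c : ι → R} {φ : E →+ R}

namespace IsQuasiFree

variable (hφ : IsQuasiFree s v c φ) (hfull : ∑ j, v j * star (v j) = 1) (hv : ∀ i, v i ∈ s)
include hφ hfull hv

theorem map_generator_mul {X : E} (hX : X ∈ s) (i : ι) : φ (v i * X) = c i * φ (X * v i) :=
  calc φ (v i * X) = φ (v i * X * ∑ j, v j * star (v j)) := by rw [hfull, mul_one]
    _ = ∑ j, φ (v i * (X * v j) * star (v j)) := by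
      simp only [Finset.mul_sum, map_sum, mul_assoc]
    _ = ∑ j, (if i = j then c i else 0) * φ (X * v j) :=
      Finset.sum_congr rfl fun j _ => hφ _ (mul_mem hX (hv j)) i j
    _ = c i * φ (X * v i) := by simp [ite_mul]

theorem map_list_prod_append (ρ σ : List ι) :
    φ ((ρ ++ σ).map v).prod = (ρ.map c).prod * φ ((σ ++ ρ).map v).prod := by
  induction ρ generalizing σ with
  | nil => simp
  | cons i ρ ih =>
    have hmem : ((ρ ++ σ).map v).prod ∈ s := list_prod_map_mem hv _
    calc φ ((i :: ρ ++ σ).map v).prod = φ (v i * ((ρ ++ σ).map v).prod) := by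
          rw [List.cons_append, List.map_cons, List.prod_cons]
      _ = c i * φ (((ρ ++ σ).map v).prod * v i) := hφ.map_generator_mul hfull hv hmem i
      _ = c i * φ ((ρ ++ (σ ++ [i])).map v).prod := by simp [← List.append_assoc]
      _ = c i * ((ρ.map c).prod * φ ((σ ++ i :: ρ).map v).prod) := by
          rw [ih, List.append_assoc, List.singleton_append]
      _ = ((i :: ρ).map c).prod * φ ((σ ++ i :: ρ).map v).prod := by
          rw [List.map_cons, List.prod_cons, mul_assoc]

theorem map_list_prod_eq_zero [IsRightCancelMulZero R] {ρ : List ι} (hρ : (ρ.map c).prod ≠ 1) :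
    φ (ρ.map v).prod = 0 := by
  have h := hφ.map_list_prod_append hfull hv ρ []
  simp only [List.append_nil, List.nil_append] at h
  exact (mul_left_eq_self₀.mp h.symm).resolve_left hρ

theorem map_list_prod_mul_star_list_prod [StarMemClass S E] [StarRing R] [IsRightCancelMulZero R]
    (hφstar : ∀ X, φ (star X) = star (φ X)) (hc : ∀ ρ ≠ [], (ρ.map c).prod ≠ 1) (μ ν : List ι) :
    φ ((μ.map v).prod * star (ν.map v).prod) = if μ = ν then (μ.map c).prod * φ 1 else 0 := by
  induction μ generalizing ν with
  | nil =>
    cases ν with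
    | nil => simp
    | cons j ν =>
      have h := hφ.map_list_prod_eq_zero hfull hv (hc (j :: ν) (List.cons_ne_nil j ν))
      rw [List.map_nil, List.prod_nil, one_mul, hφstar, h, star_zero,
        if_neg (List.cons_ne_nil j ν).symm]
  | cons i μ ih =>
    cases ν with
    | nil => simpa using hφ.map_list_prod_eq_zero hfull hv (hc (i :: μ) (List.cons_ne_nil i μ))
    | cons j ν =>
      have hmem : (μ.map v).prod * star (ν.map v).prod ∈ s :=
        mul_mem (list_prod_map_mem hv μ) (star_mem (list_prod_map_mem hv ν))
      have hsplit : ((i :: μ).map v).prod * star ((j :: ν).map v).prod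
          = v i * ((μ.map v).prod * star (ν.map v).prod) * star (v j) := by
        simp only [List.map_cons, List.prod_cons, star_mul, mul_assoc]
      rw [hsplit, hφ _ hmem i j, ih]
      by_cases hij : i = j <;> by_cases hμν : μ = ν <;> simp [hij, hμν, mul_assoc]

end IsQuasiFree

end QuasiFree

section VectorFunctional

variable {H : Type*} [NormedAddCommGroup H] [InnerProductSpace ℂ H]

/-- Only additive: Mathlib's inner product is conjugate-linear in its first argument. -/
noncomputable def vectorFunctional (ψ : H) : (H →L[ℂ] H) →+ ℂ :=
  AddMonoidHom.mk' (fun X => ⟪X ψ, ψ⟫_ℂ) fun X Y => by rw [add_apply, inner_add_left]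

theorem vectorFunctional_apply (ψ : H) (X : H →L[ℂ] H) : vectorFunctional ψ X = ⟪X ψ, ψ⟫_ℂ :=
  rfl

theorem vectorFunctional_star [CompleteSpace H] (ψ : H) (X : H →L[ℂ] H) :
    vectorFunctional ψ (star X) = star (vectorFunctional ψ X) := by
  rw [vectorFunctional_apply, vectorFunctional_apply, star_eq_adjoint, adjoint_inner_left,
    ← inner_conj_symm, RCLike.star_def]

end VectorFunctional

theorem quasifree_state_on_Cuntz_unique_general
    {H : Type*} [NormedAddCommGroup H] [InnerProductSpace ℂ H] [CompleteSpace H]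
    {d : ℕ} (hd : 2 ≤ d) (α : Fin d → ℝ) (hα : ∀ i, 0 < α i)
    (hsum : ∑ i, (α i) ^ 2 = 1)
    (V : Fin d → H →L[ℂ] H)
    (hfull : (∑ i, (V i) ∘L (adjoint (V i))) = 1)
    (ψ : H) (hψ : ‖ψ‖ = 1)
    (hqf : ∀ X : H →L[ℂ] H, X ∈ StarAlgebra.adjoin ℂ (Set.range V) →
      ∀ i j : Fin d,
        ⟪(V i) (X ((adjoint (V j)) ψ)), ψ⟫_ℂ
          = (if i = j then ((α i : ℂ)) ^ 2 else 0) * ⟪X ψ, ψ⟫_ℂ) :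
    ∀ μ ν : List (Fin d),
      ⟪((μ.map V).prod * adjoint ((ν.map V).prod)) ψ, ψ⟫_ℂ
        = if μ = ν then (((μ.map α).prod : ℝ) : ℂ) ^ 2 else 0 := by
  intro μ ν
  have hφ : IsQuasiFree (StarAlgebra.adjoin ℂ (Set.range V)) V (fun i => (α i : ℂ) ^ 2)
      (vectorFunctional ψ) := hqf
  have hα_lt_one : ∀ i, α i < 1 := fun i => by
    have : Nontrivial (Fin d) := Fin.nontrivial_iff_two_le.mpr hd
    obtain ⟨j, hj⟩ := exists_ne i
    have hsq : α i ^ 2 < 1 := hsum ▸ Finset.single_lt_sum hj (Finset.mem_univ i)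
      (Finset.mem_univ j) (pow_pos (hα j) 2) fun k _ _ => sq_nonneg (α k)
    exact (sq_lt_one_iff₀ (hα i).le).mp hsq
  have hcast : ∀ ρ : List (Fin d),
      (ρ.map fun i => (α i : ℂ) ^ 2).prod = (((ρ.map α).prod : ℝ) : ℂ) ^ 2 := by
    intro ρ
    induction ρ <;> simp [*, mul_pow]
  have hc : ∀ ρ ≠ [], (ρ.map fun i => (α i : ℂ) ^ 2).prod ≠ 1 := by
    intro ρ hρ
    have hlt := List.prod_map_lt_one (fun i => (hα i).le) hα_lt_one hρ
    rw [hcast, ← Complex.ofReal_pow, Ne, Complex.ofReal_eq_one]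
    have hnonneg : 0 ≤ (ρ.map α).prod := List.prod_nonneg (by simpa using fun i _ => (hα i).le)
    exact (pow_lt_one₀ hnonneg hlt two_ne_zero).ne
  have key := hφ.map_list_prod_mul_star_list_prod hfull
    (fun i => StarAlgebra.subset_adjoin ℂ _ ⟨i, rfl⟩) (vectorFunctional_star ψ) hc μ ν
  rw [star_eq_adjoint, vectorFunctional_apply, hcast] at key
  simpa [vectorFunctional_apply, inner_self_eq_norm_sq_to_K, hψ] using key

/-- If `V₀, …, V_{d-1}` are `d` Cuntz isometries on `H` and `ψ` is a unit vector satisfying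
the quasi-free condition `⟨V_i X V_j* ψ, ψ⟩ = δ_{ij} (α i)² ⟨X ψ, ψ⟩` for all `X` in the
unital *-subalgebra generated by the `V_i`, then for all words `μ, ν` over `Fin d`,
`⟨V_μ (V_ν)* ψ, ψ⟩ = δ_{μν} (α_μ)²`; in particular, the state `⟨· ψ, ψ⟩` on the Cuntz
algebra generated by `V₀, …, V_{d-1}` is uniquely determined by `α`. -/
theorem quasifree_state_on_Cuntz_unique
    {H : Type*} [NormedAddCommGroup H] [InnerProductSpace ℂ H] [CompleteSpace H]
    {d : ℕ} (hd : 2 ≤ d) (α : Fin d → ℝ) (hα : ∀ i, 0 < α i)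
    (hsum : ∑ i, (α i) ^ 2 = 1)
    (V : Fin d → H →L[ℂ] H)
    (hiso : ∀ i, (adjoint (V i)) ∘L (V i) = 1)
    (hfull : (∑ i, (V i) ∘L (adjoint (V i))) = 1)
    (ψ : H) (hψ : ‖ψ‖ = 1)
    (hqf : ∀ X : H →L[ℂ] H, X ∈ StarAlgebra.adjoin ℂ (Set.range V) →
      ∀ i j : Fin d,
        ⟪(V i) (X ((adjoint (V j)) ψ)), ψ⟫_ℂ
          = (if i = j then ((α i : ℂ)) ^ 2 else 0) * ⟪X ψ, ψ⟫_ℂ) :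
    ∀ μ ν : List (Fin d),
      ⟪((μ.map V).prod * adjoint ((ν.map V).prod)) ψ, ψ⟫_ℂ
        = if μ = ν then (((μ.map α).prod : ℝ) : ℂ) ^ 2 else 0 :=
  quasifree_state_on_Cuntz_unique_general hd α hα hsum V hfull ψ hψ hqf
end

section
/- Let d ∈ ℕ with d ≥ 2 and let p be a polynomial with integer coefficients such that p(0) = −1, p(1) = d − 1, and every coefficient of p of degree ≥ 1 is nonnegative. Then p has exactly one real root in the open interval (0, 1); that is, there is exactly one λ ∈ ℝ with 0 < λ < 1 and p(λ) = 0. -/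
/-!
Write `p(x) = -1 + ∑_{n ≥ 1} cₙ xⁿ` with `cₙ ≥ 0`. Since `p(1) - p(0) = ∑_{n ≥ 1} cₙ = d > 0`,
some `cₖ` with `k ≥ 1` is positive, so `p` is strictly increasing on `[0, ∞)`. As `p(0) < 0 < p(1)`,
the intermediate value theorem gives a root in `(0, 1)` and strict monotonicity makes it unique.
-/

open Polynomial Set

namespace Polynomial

variable {R : Type*} [Semiring R] [LinearOrder R] [IsStrictOrderedRing R]

theorem exists_coeff_pos_of_eval_zero_lt_eval_one {q : R[X]} (h : q.eval 0 < q.eval 1) :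
    ∃ k, 1 ≤ k ∧ 0 < q.coeff k := by
  by_contra! hle
  have hsum : q.eval 1 ≤ q.eval 0 := by
    rw [eval_eq_sum_range, Finset.sum_range_succ', coeff_zero_eq_eval_zero]
    simpa using Finset.sum_nonpos fun n _ => hle (n + 1) (Nat.le_add_left 1 n)
  exact hsum.not_gt h

theorem strictMonoOn_eval_of_coeff_nonneg {q : R[X]} (hc : ∀ n, 1 ≤ n → 0 ≤ q.coeff n)
    {k : ℕ} (hk : 1 ≤ k) (hqk : 0 < q.coeff k) : StrictMonoOn q.eval (Ici 0) := by
  intro x hx y _ hxy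
  simp only [eval_eq_sum_range]
  refine Finset.sum_lt_sum (fun n _ => ?_) ⟨k, ?_, ?_⟩
  · rcases Nat.eq_zero_or_pos n with rfl | hn
    · simp
    · exact mul_le_mul_of_nonneg_left (pow_le_pow_left₀ hx hxy.le n) (hc n hn)
  · exact Finset.mem_range.mpr (Nat.lt_succ_of_le (le_natDegree_of_ne_zero hqk.ne'))
  · exact mul_lt_mul_of_pos_left (pow_lt_pow_left₀ hxy hx (by omega)) hqk

end Polynomial

theorem existsUnique_mem_Ioo_eq_of_strictMonoOn {α δ : Type*} [ConditionallyCompleteLinearOrder α]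
    [TopologicalSpace α] [OrderTopology α] [DenselyOrdered α] [LinearOrder δ] [TopologicalSpace δ]
    [OrderClosedTopology δ] {f : α → δ} {a b : α} {c : δ} (hab : a ≤ b)
    (hcont : ContinuousOn f (Icc a b)) (hmono : StrictMonoOn f (Icc a b))
    (ha : f a < c) (hb : c < f b) : ∃! x, x ∈ Ioo a b ∧ f x = c := by
  obtain ⟨x, hx, hfx⟩ := intermediate_value_Ioo hab hcont ⟨ha, hb⟩
  refine ⟨x, ⟨hx, hfx⟩, fun y ⟨hy, hfy⟩ => ?_⟩
  exact hmono.injOn (Ioo_subset_Icc_self hy) (Ioo_subset_Icc_self hx) (hfy.trans hfx.symm)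

/-- If `p ∈ ℤ[x]` satisfies `p(0) = -1`, `p(1) = d - 1` with `d ≥ 2`, and all coefficients
of degree at least `1` are nonnegative, then `p` has exactly one real root in `(0, 1)`. -/
theorem unique_root_in_unit_interval
    (d : ℕ) (hd : 2 ≤ d) (p : Polynomial ℤ)
    (h0 : p.eval 0 = -1) (h1 : p.eval 1 = (d : ℤ) - 1)
    (hc : ∀ n : ℕ, 1 ≤ n → 0 ≤ p.coeff n) :
    ∃! x : ℝ, x ∈ Set.Ioo (0 : ℝ) 1 ∧ Polynomial.aeval x p = 0 := by
  set q := p.map (algebraMap ℤ ℝ)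
  have hq0 : q.eval 0 < 0 := by simp [q, h0]
  have hq1 : 0 < q.eval 1 := by
    have hd' : (1 : ℝ) < d := by exact_mod_cast hd
    simpa [q, h1] using hd'
  have hqc : ∀ n, 1 ≤ n → 0 ≤ q.coeff n := fun n hn => by simpa [q] using hc n hn
  obtain ⟨k, hk, hqk⟩ := exists_coeff_pos_of_eval_zero_lt_eval_one (hq0.trans hq1)
  have hmono : StrictMonoOn q.eval (Icc 0 1) :=
    (strictMonoOn_eval_of_coeff_nonneg hqc hk hqk).mono Icc_subset_Ici_self
  simpa only [aeval_def, eval₂_eq_eval_map] using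
    existsUnique_mem_Ioo_eq_of_strictMonoOn zero_le_one q.continuousOn hmono hq0 hq1
end
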